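/- Let ρ = O = V†|0⟩⟨0|V for a Clifford V, and perform biased-MCM estimation: sample a stabilizer MUB element U with probability p_U = (max_b α_{U,b} − 2^{-n})/(1 − 2^{-n}) where α_{U,b} = |⟨b|UV†|0⟩|², measure in basis U to get b, and output Ô = (α_{U,b} − 2^{-n})/p_U + 2^{-n}. Then Ô = 1 deterministically, i.e., the estimator has zero variance. -/

import Mathlib

open Matrix Finset

noncomputable section

/-- Bit strings of length `n`, indexing the computational basis of `n` qubits. -/
abbrev Bits (n : ℕ) := Fin n → Fin 2

/-- The four single-qubit Pauli matrices `I, X, Y, Z`. -/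
def P1 : Fin 4 → Matrix (Fin 2) (Fin 2) ℂ :=
  ![!![1, 0; 0, 1], !![0, 1; 1, 0], !![0, -Complex.I; Complex.I, 0], !![1, 0; 0, -1]]

/-- The `n`-qubit Pauli string `⊗_k P1 (a k)`. -/
def PString (n : ℕ) (a : Fin n → Fin 4) : Matrix (Bits n) (Bits n) ℂ :=
  Matrix.of fun x y => ∏ k, P1 (a k) (x k) (y k)

/-- The single-qubit Pauli-Z matrix. -/
def PZ : Matrix (Fin 2) (Fin 2) ℂ := !![1, 0; 0, -1]

/-- The tensor product `Z_m = ⊗_i Z^{m_i}`. -/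
def Zm (n : ℕ) (m : Bits n) : Matrix (Bits n) (Bits n) ℂ :=
  Matrix.of fun x y => ∏ k, (PZ ^ (m k : ℕ)) (x k) (y k)

/-- A unitary is Clifford if conjugation sends every Pauli string to a phase
(`±1, ±i`) times a Pauli string. -/
def IsClifford (n : ℕ) (U : Matrix (Bits n) (Bits n) ℂ) : Prop :=
  ∀ a : Fin n → Fin 4, ∃ c ∈ ({1, -1, Complex.I, -Complex.I} : Set ℂ),
    ∃ a' : Fin n → Fin 4, Uᴴ * PString n a * U = c • PString n a'

section
variable {n : ℕ}

lemma fin2cases (i : Fin 2) : i = 0 ∨ i = 1 := by fin_cases i <;> simp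

lemma P1_trace (i j : Fin 4) : (P1 i * P1 j).trace = if i = j then 2 else 0 := by
  fin_cases i <;> fin_cases j <;>
    simp [P1, Matrix.trace, Matrix.mul_apply, Fin.sum_univ_two, Complex.I_mul_I] <;>
    ring_nf

end

section
variable {n : ℕ}

lemma trace_PString_mul (a b : Fin n → Fin 4) :
    (PString n a * PString n b).trace = ∏ k, (P1 (a k) * P1 (b k)).trace := by
  have h1 : ∀ k, (P1 (a k) * P1 (b k)).trace = ∑ i : Fin 2, ∑ j : Fin 2,
      P1 (a k) i j * P1 (b k) j i := by
    intro k; simp [Matrix.trace, Matrix.mul_apply, Matrix.diag]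
  simp only [h1, Fintype.prod_sum]
  rw [Matrix.trace]
  simp only [Matrix.diag, Matrix.mul_apply, PString, Matrix.of_apply,
    ← Finset.prod_mul_distrib]

lemma trace_PString_mul' (a b : Fin n → Fin 4) :
    (PString n a * PString n b).trace = if a = b then (2:ℂ)^n else 0 := by
  rw [trace_PString_mul]
  by_cases h : a = b
  · subst h; simp [P1_trace]
  · obtain ⟨k, hk⟩ : ∃ k, a k ≠ b k := by
      by_contra hc; push_neg at hc; exact h (funext hc)
    rw [if_neg h]
    exact Finset.prod_eq_zero (Finset.mem_univ k) (by simp [P1_trace, hk])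

lemma PString_inj {a b : Fin n → Fin 4} {c : ℂ} (h : PString n a = c • PString n b) :
    a = b := by
  by_contra hab
  have h2 : (PString n a * PString n a).trace = c * (PString n b * PString n a).trace := by
    rw [h]; simp [Matrix.smul_mul]
  rw [trace_PString_mul', trace_PString_mul'] at h2
  rw [if_pos rfl, if_neg (fun h => hab h.symm)] at h2
  simp at h2


end
section
variable {n : ℕ}

/-- Inverse-conjugation Clifford property. -/
lemma clifford_inv {V : Matrix (Bits n) (Bits n) ℂ}
    (hV : Vᴴ * V = 1 ∧ V * Vᴴ = 1) (hVC : IsClifford n V) :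
    ∀ a : Fin n → Fin 4, ∃ c : ℂ, ∃ a' : Fin n → Fin 4,
      V * PString n a * Vᴴ = c • PString n a' := by
  classical
  choose c hc a' ha' using hVC
  have hcne : ∀ a, c a ≠ 0 := by
    intro a
    have := hc a
    simp only [Set.mem_insert_iff, Set.mem_singleton_iff] at this
    rcases this with h | h | h | h <;> simp [h, Complex.I_ne_zero]
  have hinj : Function.Injective a' := by
    intro a₁ a₂ h12
    have e1 : PString n a₁ = (c a₁ * (c a₂)⁻¹) • PString n a₂ := by
      have k1 : V * (Vᴴ * PString n a₁ * V) * Vᴴ = PString n a₁ := by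
        rw [show V * (Vᴴ * PString n a₁ * V) * Vᴴ
            = (V * Vᴴ) * PString n a₁ * (V * Vᴴ) by noncomm_ring, hV.2]
        simp
      have k2 : V * (Vᴴ * PString n a₂ * V) * Vᴴ = PString n a₂ := by
        rw [show V * (Vᴴ * PString n a₂ * V) * Vᴴ
            = (V * Vᴴ) * PString n a₂ * (V * Vᴴ) by noncomm_ring, hV.2]
        simp
      calc PString n a₁ = V * (Vᴴ * PString n a₁ * V) * Vᴴ := k1.symm
        _ = V * ((c a₁) • PString n (a' a₁)) * Vᴴ := by rw [ha']
        _ = V * ((c a₁ * (c a₂)⁻¹) • ((c a₂) • PString n (a' a₂))) * Vᴴ := by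
            rw [h12, smul_smul]
            congr 1
            rw [mul_assoc, inv_mul_cancel₀ (hcne a₂), mul_one]
        _ = V * ((c a₁ * (c a₂)⁻¹) • (Vᴴ * PString n a₂ * V)) * Vᴴ := by rw [ha']
        _ = (c a₁ * (c a₂)⁻¹) • (V * (Vᴴ * PString n a₂ * V) * Vᴴ) := by
            rw [Matrix.mul_smul, Matrix.smul_mul]
        _ = (c a₁ * (c a₂)⁻¹) • PString n a₂ := by rw [k2]
    exact PString_inj e1
  have hsurj : Function.Surjective a' := Finite.surjective_of_injective hinj
  intro b
  obtain ⟨a, ha⟩ := hsurj b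
  refine ⟨(c a)⁻¹, a, ?_⟩
  have : Vᴴ * PString n a * V = c a • PString n b := by rw [ha' a, ha]
  calc V * PString n b * Vᴴ
      = (c a)⁻¹ • (V * (c a • PString n b) * Vᴴ) := by
        rw [Matrix.mul_smul, Matrix.smul_mul, smul_smul, inv_mul_cancel₀ (hcne a), one_smul]
    _ = (c a)⁻¹ • (V * (Vᴴ * PString n a * V) * Vᴴ) := by rw [this]
    _ = (c a)⁻¹ • PString n a := by
        rw [show V * (Vᴴ * PString n a * V) * Vᴴ
            = (V * Vᴴ) * PString n a * (V * Vᴴ) by noncomm_ring, hV.2]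
        simp

end
section
variable {n : ℕ}

lemma PZ_sq : PZ * PZ = 1 := by
  ext i j
  fin_cases i <;> fin_cases j <;>
    simp [PZ, Matrix.mul_apply, Fin.sum_univ_two, Matrix.one_apply]

lemma PZ_pow_add (i j : Fin 2) : PZ ^ (i:ℕ) * PZ ^ (j:ℕ) = PZ ^ (((i+j):Fin 2):ℕ) := by
  rcases fin2cases i with hi | hi <;> rcases fin2cases j with hj | hj <;>
    subst hi <;> subst hj <;> simp [PZ_sq]

lemma prodsum {κ : Type} [Fintype κ] (f : Fin n → κ → ℂ) :
    ∑ x : Fin n → κ, ∏ i, f i (x i) = ∏ i, ∑ j, f i j := (Fintype.prod_sum f).symm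

lemma Zm_mul (m m' : Bits n) : Zm n m * Zm n m' = Zm n (m + m') := by
  ext x y
  simp only [Zm, Matrix.mul_apply, Matrix.of_apply, ← Finset.prod_mul_distrib]
  rw [prodsum (fun k j => (PZ ^ (m k : ℕ)) (x k) j * (PZ ^ (m' k : ℕ)) j (y k))]
  refine Finset.prod_congr rfl fun k _ => ?_
  rw [show (∑ j : Fin 2, (PZ ^ (m k : ℕ)) (x k) j * (PZ ^ (m' k : ℕ)) j (y k))
      = (PZ ^ (m k : ℕ) * PZ ^ (m' k : ℕ)) (x k) (y k) from (Matrix.mul_apply).symm,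
    PZ_pow_add]
  rfl

lemma Zm_zero : Zm n 0 = 1 := by
  ext x y
  simp only [Zm, Matrix.of_apply]
  by_cases h : x = y
  · subst h; simp [Matrix.one_apply]
  · obtain ⟨k, hk⟩ : ∃ k, x k ≠ y k := by
      by_contra hc; push_neg at hc; exact h (funext hc)
    rw [Matrix.one_apply_ne h]
    exact Finset.prod_eq_zero (Finset.mem_univ k) (by simp [Matrix.one_apply, hk])

lemma bits_add_self (m : Bits n) : m + m = 0 := by
  funext k
  rcases fin2cases (m k) with h | h <;> simp [Pi.add_apply, h] <;> rfl

lemma sum_Zm : (∑ m : Bits n, Zm n m) =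
    Matrix.of (fun x y => if x = 0 ∧ y = 0 then (2:ℂ)^n else 0) := by
  ext x y
  simp only [Matrix.sum_apply, Zm, Matrix.of_apply]
  rw [prodsum (fun (k : Fin n) (j : Fin 2) => (PZ ^ (j : ℕ)) (x k) (y k))]
  have h1 : ∀ k, (∑ j : Fin 2, (PZ ^ (j : ℕ)) (x k) (y k)) =
      if x k = 0 ∧ y k = 0 then 2 else 0 := by
    intro k
    rcases fin2cases (x k) with h | h <;> rcases fin2cases (y k) with h' | h' <;>
      rw [h, h'] <;> norm_num [Fin.sum_univ_two, PZ]
  simp only [h1]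
  by_cases hx : x = 0 ∧ y = 0
  · rw [if_pos hx]
    have : ∀ k, (if x k = 0 ∧ y k = 0 then (2:ℂ) else 0) = 2 := by
      intro k; rw [if_pos ⟨by rw [hx.1]; rfl, by rw [hx.2]; rfl⟩]
    simp [this]
  · rw [if_neg hx]
    have : ∃ k, ¬(x k = 0 ∧ y k = 0) := by
      by_contra hc; push_neg at hc
      exact hx ⟨funext fun k => (hc k).1, funext fun k => ((hc k)).2⟩
    obtain ⟨k, hk⟩ := this
    exact Finset.prod_eq_zero (Finset.mem_univ k) (by rw [if_neg hk])

end
section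
variable {n : ℕ}

lemma P1_diag_off {j : Fin 4} {i : Fin 2} (hne : P1 j i i ≠ 0) :
    ∀ i1 i2 : Fin 2, i1 ≠ i2 → P1 j i1 i2 = 0 := by
  fin_cases j <;> fin_cases i <;>
    first
      | (intro i1 i2 h12; fin_cases i1 <;> fin_cases i2 <;> simp_all [P1])
      | (exfalso; revert hne; simp [P1])

lemma key1 {W : Matrix (Bits n) (Bits n) ℂ}
    (hT : ∀ m : Bits n, ∃ c : ℂ, ∃ a, W * Zm n m * Wᴴ = c • PString n a)
    (m : Bits n) (x : Bits n) (hx : (W * Zm n m * Wᴴ) x x ≠ 0) :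
    ∀ y z : Bits n, y ≠ z → (W * Zm n m * Wᴴ) y z = 0 := by
  obtain ⟨c, a, hca⟩ := hT m
  rw [hca] at hx ⊢
  simp only [Matrix.smul_apply, PString, Matrix.of_apply, smul_eq_mul] at hx ⊢
  have hfac : ∀ k, P1 (a k) (x k) (x k) ≠ 0 := by
    intro k hk
    exact hx (by rw [Finset.prod_eq_zero (Finset.mem_univ k) hk, mul_zero])
  intro y z hyz
  obtain ⟨k, hk⟩ : ∃ k, y k ≠ z k := by
    by_contra hc; push_neg at hc; exact hyz (funext hc)
  rw [Finset.prod_eq_zero (Finset.mem_univ k) (P1_diag_off (hfac k) _ _ hk), mul_zero]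

lemma flat_aux (W : Matrix (Bits n) (Bits n) ℂ)
    (hW1 : Wᴴ * W = 1) (hW2 : W * Wᴴ = 1)
    (hT : ∀ m : Bits n, ∃ c : ℂ, ∃ a, W * Zm n m * Wᴴ = c • PString n a)
    (b b' : Bits n)
    (hb : W b 0 * (starRingEnd ℂ) (W b 0) ≠ 0)
    (hb' : W b' 0 * (starRingEnd ℂ) (W b' 0) ≠ 0) :
    W b 0 * (starRingEnd ℂ) (W b 0) = W b' 0 * (starRingEnd ℂ) (W b' 0) := by
  classical
  set T : Bits n → Matrix (Bits n) (Bits n) ℂ := fun m => W * Zm n m * Wᴴ with hTdef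
  have hTmul : ∀ m m', T m * T m' = T (m + m') := by
    intro m m'
    calc T m * T m' = W * Zm n m * (Wᴴ * W) * Zm n m' * Wᴴ := by
          simp only [hTdef]; noncomm_ring
      _ = W * (Zm n m * Zm n m') * Wᴴ := by rw [hW1]; noncomm_ring
      _ = T (m + m') := by rw [Zm_mul]
  have hT0 : T 0 = 1 := by
    simp only [hTdef]; rw [Zm_zero, Matrix.mul_one, hW2]
  set Dg : Bits n → Prop := fun m => ∀ y z, y ≠ z → T m y z = 0 with hDgdef
  have hkey : ∀ m x, T m x x ≠ 0 → Dg m := fun m x hx => key1 hT m x hx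
  have hdmul : ∀ {m m'}, Dg m → Dg m' → ∀ x, T (m + m') x x = T m x x * T m' x x := by
    intro m m' hm hm' x
    rw [← hTmul, Matrix.mul_apply]
    rw [Finset.sum_eq_single x]
    · intro u _ hu; rw [hm x u (Ne.symm hu), zero_mul]
    · intro h; exact absurd (Finset.mem_univ x) h
  have hDgadd : ∀ {m m'}, Dg m → Dg m' → Dg (m + m') := by
    intro m m' hm hm' y z hyz
    rw [← hTmul, Matrix.mul_apply]
    refine Finset.sum_eq_zero fun u _ => ?_
    by_cases hu : y = u
    · rw [← hu, hm' y z hyz, mul_zero]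
    · rw [hm y u hu, zero_mul]
  have hsq : ∀ {m} (x : Bits n), Dg m → T m x x = 1 ∨ T m x x = -1 := by
    intro m x hm
    have := hdmul hm hm x
    rw [bits_add_self, hT0, Matrix.one_apply_eq] at this
    exact mul_self_eq_one_iff.mp this.symm
  -- sum identity
  have hS : ∀ x : Bits n, (∑ m, T m x x) = (2:ℂ)^n * (W x 0 * (starRingEnd ℂ) (W x 0)) := by
    intro x
    have e1 : (∑ m, T m x x) = (W * (∑ m : Bits n, Zm n m) * Wᴴ) x x := by
      rw [Finset.mul_sum, Finset.sum_mul, Matrix.sum_apply]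
    rw [e1, sum_Zm, Matrix.mul_apply]
    rw [Finset.sum_eq_single (0 : Bits n)]
    · rw [Matrix.mul_apply, Finset.sum_eq_single (0 : Bits n)]
      · simp only [Matrix.of_apply, Matrix.conjTranspose_apply, starRingEnd_apply,
          and_self, if_true, eq_self_iff_true]
        ring
      · intro u _ hu; simp [hu]
      · intro h; exact absurd (Finset.mem_univ _) h
    · intro v _ hv
      rw [Matrix.mul_apply, Finset.sum_eq_zero, zero_mul]
      intro u _; simp [hv]
    · intro h; exact absurd (Finset.mem_univ _) h
  -- no minus-one values
  have hplus : ∀ x : Bits n, (W x 0 * (starRingEnd ℂ) (W x 0) ≠ 0) →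
      ∀ m, Dg m → T m x x = 1 := by
    intro x hx m hm
    rcases hsq x hm with h1 | h1
    · exact h1
    · exfalso
      have hflip : ∀ m', T (m' + m) x x = - T m' x x := by
        intro m'
        by_cases hm' : Dg m'
        · rw [hdmul hm' hm, h1]; ring
        · have h0 : T m' x x = 0 := by
            by_contra hne; exact hm' (hkey m' x hne)
          have h0' : T (m' + m) x x = 0 := by
            by_contra hne
            have : Dg (m' + m) := hkey _ x hne
            have := hDgadd this hm
            rw [add_assoc, bits_add_self, add_zero] at this
            exact hm' this
          rw [h0, h0', neg_zero]
      have e2 : (∑ m', T m' x x) = - (∑ m', T m' x x) := by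
        calc (∑ m', T m' x x) = ∑ m', T (m' + m) x x := by
              exact (Fintype.sum_equiv (Equiv.addRight m) _ _ (fun m' => rfl)).symm
          _ = - (∑ m', T m' x x) := by rw [← Finset.sum_neg_distrib]; exact Finset.sum_congr rfl fun m' _ => hflip m'
      have e3 : (∑ m', T m' x x) = 0 := by linear_combination e2 / 2
      rw [hS x] at e3
      rcases mul_eq_zero.mp e3 with h | h
      · exact (pow_ne_zero n two_ne_zero) h
      · exact hx h
  -- both sums equal
  have hval : ∀ x : Bits n, (W x 0 * (starRingEnd ℂ) (W x 0) ≠ 0) →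
      (∑ m, T m x x) = ∑ m, (if Dg m then (1:ℂ) else 0) := by
    intro x hx
    refine Finset.sum_congr rfl fun m _ => ?_
    by_cases hm : Dg m
    · rw [if_pos hm, hplus x hx m hm]
    · rw [if_neg hm]
      by_contra hne; exact hm (hkey m x hne)
  have := (hS b).symm.trans ((hval b hb).trans ((hval b' hb').symm.trans (hS b')))
  exact mul_left_cancel₀ (pow_ne_zero n two_ne_zero) this

end
section
variable {n : ℕ}

lemma Zm_eq_PString (m : Bits n) :
    Zm n m = PString n (fun k => if m k = 0 then 0 else 3) := by
  ext x y
  simp only [Zm, PString, Matrix.of_apply]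
  refine Finset.prod_congr rfl fun k _ => ?_
  rcases fin2cases (m k) with h | h <;> rw [h]
  · norm_num [P1]
    rw [Matrix.one_apply]
    rcases fin2cases (x k) with hx | hx <;> rcases fin2cases (y k) with hy | hy <;>
      rw [hx, hy] <;> simp [Matrix.one_apply]
  · norm_num [P1, PZ]
    rcases fin2cases (x k) with hx | hx <;> rcases fin2cases (y k) with hy | hy <;>
      rw [hx, hy] <;> rfl

end

/-- biased-MCM on `ρ = O = V†|0⟩⟨0|V` for a Clifford `V`. With
`α_{U,b} = |⟨b|UV†|0⟩|²` and sampling probabilities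
`p_U = (max_b α_{U,b} − 2^{-n})/(1 − 2^{-n})`, whenever `U` can be sampled
(`p_U > 0`) and `b` has nonzero Born probability (`α_{U,b} ≠ 0`, since the measured
state is `ρ = O`), the estimator `Ô = (α_{U,b} − 2^{-n})/p_U + 2^{-n}` equals `1`
deterministically: zero variance. -/
theorem stmt18 (n : ℕ) (ι : Type) [Fintype ι] (hι : Fintype.card ι = 2 ^ n + 1)
    (U : ι → Matrix (Bits n) (Bits n) ℂ)
    (hU : ∀ u, (U u)ᴴ * U u = 1 ∧ U u * (U u)ᴴ = 1)
    (hUC : ∀ u, IsClifford n (U u))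
    (hcover : ∀ a : Fin n → Fin 4, a ≠ (fun _ => 0) →
      ∃! q : ι × Bits n, q.2 ≠ (fun _ => 0) ∧
        ((U q.1)ᴴ * Zm n q.2 * U q.1 = PString n a ∨
          (U q.1)ᴴ * Zm n q.2 * U q.1 = -(PString n a)))
    (V : Matrix (Bits n) (Bits n) ℂ)
    (hV : Vᴴ * V = 1 ∧ V * Vᴴ = 1) (hVC : IsClifford n V)
    (α : ι → Bits n → ℝ)
    (hα : ∀ u b, α u b = ‖(U u * Vᴴ) b (fun _ => 0)‖ ^ 2)
    (p : ι → ℝ)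
    (hp : ∀ u, p u = ((Finset.univ.sup' Finset.univ_nonempty (α u)) - ((2 : ℝ) ^ n)⁻¹) /
      (1 - ((2 : ℝ) ^ n)⁻¹)) :
    ∀ u : ι, ∀ b : Bits n, 0 < p u → α u b ≠ 0 →
      (α u b - ((2 : ℝ) ^ n)⁻¹) / p u + ((2 : ℝ) ^ n)⁻¹ = 1 := by
  intro u b hpu hab
  classical
  set W : Matrix (Bits n) (Bits n) ℂ := U u * Vᴴ with hWdef
  have hWH : Wᴴ = V * (U u)ᴴ := by
    rw [hWdef, Matrix.conjTranspose_mul, Matrix.conjTranspose_conjTranspose]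
  have hW1 : Wᴴ * W = 1 := by
    rw [hWH, hWdef]
    calc V * (U u)ᴴ * (U u * Vᴴ) = V * ((U u)ᴴ * U u) * Vᴴ := by noncomm_ring
      _ = 1 := by rw [(hU u).1, Matrix.mul_one, hV.2]
  have hW2 : W * Wᴴ = 1 := by
    rw [hWH, hWdef]
    calc U u * Vᴴ * (V * (U u)ᴴ) = U u * (Vᴴ * V) * (U u)ᴴ := by noncomm_ring
      _ = 1 := by rw [hV.1, Matrix.mul_one, (hU u).2]
  have hT : ∀ m : Bits n, ∃ c : ℂ, ∃ a, W * Zm n m * Wᴴ = c • PString n a := by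
    intro m
    obtain ⟨c1, _, a1, ha1⟩ := hVC (fun k => if m k = 0 then 0 else 3)
    obtain ⟨c2, a2, ha2⟩ := clifford_inv (hU u) (hUC u) a1
    refine ⟨c1 * c2, a2, ?_⟩
    rw [hWdef, hWH, Zm_eq_PString m]
    calc U u * Vᴴ * PString n (fun k => if m k = 0 then 0 else 3) * (V * (U u)ᴴ)
        = U u * (Vᴴ * PString n (fun k => if m k = 0 then 0 else 3) * V) * (U u)ᴴ := by
          noncomm_ring
      _ = U u * (c1 • PString n a1) * (U u)ᴴ := by rw [ha1]
      _ = c1 • (U u * PString n a1 * (U u)ᴴ) := by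
          rw [Matrix.mul_smul, Matrix.smul_mul]
      _ = c1 • (c2 • PString n a2) := by rw [ha2]
      _ = (c1 * c2) • PString n a2 := by rw [smul_smul]
  have hαc : ∀ x : Bits n, ((α u x : ℝ) : ℂ) = W x 0 * (starRingEnd ℂ) (W x 0) := by
    intro x
    rw [hα u x, Complex.sq_norm]
    exact (Complex.mul_conj _).symm
  have hnz : ∀ x : Bits n, α u x ≠ 0 → W x 0 * (starRingEnd ℂ) (W x 0) ≠ 0 := by
    intro x hx
    rw [← hαc x]
    exact fun h => hx (by exact_mod_cast h)
  have hflat : ∀ x y : Bits n, α u x ≠ 0 → α u y ≠ 0 → α u x = α u y := by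
    intro x y hx hy
    have := flat_aux W hW1 hW2 hT x y (hnz x hx) (hnz y hy)
    rw [← hαc x, ← hαc y] at this
    exact_mod_cast this
  have hnonneg : ∀ x : Bits n, 0 ≤ α u x := by
    intro x; rw [hα u x]; positivity
  -- sum of α equals 1
  have hsumc : (∑ x : Bits n, ((α u x : ℝ) : ℂ)) = 1 := by
    have : (∑ x : Bits n, W x 0 * (starRingEnd ℂ) (W x 0)) = (Wᴴ * W) 0 0 := by
      rw [Matrix.mul_apply]
      refine Finset.sum_congr rfl fun x _ => ?_
      rw [Matrix.conjTranspose_apply, starRingEnd_apply]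
      ring
    simp only [hαc]
    rw [this, hW1, Matrix.one_apply_eq]
  have hsum : (∑ x : Bits n, α u x) = 1 := by
    have := hsumc
    rw [← Complex.ofReal_sum] at this
    exact_mod_cast this
  obtain ⟨b0, hb0⟩ : ∃ b0 : Bits n, α u b0 ≠ 0 := by
    by_contra hc; push_neg at hc
    rw [Finset.sum_congr rfl (fun x _ => hc x)] at hsum
    simp at hsum
  have hs : Finset.univ.sup' Finset.univ_nonempty (α u) = α u b := by
    refine le_antisymm (Finset.sup'_le _ _ fun x _ => ?_) (Finset.le_sup' (α u) (Finset.mem_univ b))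
    by_cases hx : α u x = 0
    · rw [hx]; exact hnonneg b
    · exact le_of_eq (hflat x b hx hab)
  rcases Nat.eq_zero_or_pos n with hn | hn
  · exfalso
    subst hn
    rw [hp u] at hpu
    norm_num at hpu
  · have h2n : (1:ℝ) < (2:ℝ) ^ n := one_lt_pow₀ one_lt_two hn.ne'
    have hδ : ((2:ℝ) ^ n)⁻¹ < 1 := inv_lt_one_of_one_lt₀ h2n
    have hden : (0:ℝ) < 1 - ((2:ℝ) ^ n)⁻¹ := by linarith
    rw [hp u, hs] at hpu ⊢
    have hnum : 0 < α u b - ((2:ℝ) ^ n)⁻¹ := by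
      rcases div_pos_iff.mp hpu with ⟨h1, _⟩ | ⟨_, h2⟩
      · exact h1
      · linarith
    rw [div_div_eq_mul_div, mul_comm, mul_div_assoc, div_self hnum.ne', mul_one]
    ring
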